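/- Let s, t be two states in a finite-state pLTS and m_max the greatest state-metric. Then s ∼ t if and only if m_max(s,t) = 0. -/

import Mathlib

open scoped Classical

/-- A (discrete) probability distribution over a finite set `S`. -/
structure FDist (S : Type*) [Fintype S] where
  f : S → ℝ
  nonneg : ∀ s, 0 ≤ f s
  sum_one : ∑ s, f s = 1

/-- The point distribution at `s`. -/
noncomputable def FDist.point {S : Type*} [Fintype S] (s : S) : FDist S where
  f := fun u => if u = s then 1 else 0
  nonneg := by intro u; show 0 ≤ (if u = s then (1:ℝ) else 0); split <;> norm_num
  sum_one := by simp

/-- The lifting `R†` of a relation to distributions: the smallest relation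
relating point distributions of related states and closed under convex
combinations. -/
inductive Lift {S T : Type*} [Fintype S] [Fintype T] (R : S → T → Prop) :
    FDist S → FDist T → Prop
  | point {s : S} {t : T} :
      R s t → Lift R (FDist.point s) (FDist.point t)
  | convex (I : Finset ℕ) (p : ℕ → ℝ)
      (hp : ∀ i ∈ I, 0 ≤ p i) (hsum : ∑ i ∈ I, p i = 1)
      (Δs : ℕ → FDist S) (Θs : ℕ → FDist T)
      (h : ∀ i ∈ I, Lift R (Δs i) (Θs i))
      (Δ : FDist S) (Θ : FDist T)
      (hΔ : Δ.f = ∑ i ∈ I, p i • (Δs i).f)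
      (hΘ : Θ.f = ∑ i ∈ I, p i • (Θs i).f) :
      Lift R Δ Θ
/-- A probabilistic labelled transition system over a finite set of states. -/
structure PLTS (S : Type*) [Fintype S] (Act : Type*) where
  trans : S → Act → FDist S → Prop

/-- The derivatives of `s` under action `a`: `der(s,a) = {Δ | s −a→ Δ}`. -/
def der {S : Type*} [Fintype S] {Act : Type*} (L : PLTS S Act) (s : S) (a : Act) :
    Set (FDist S) :=
  { Δ | L.trans s a Δ }

/-- `R` is a probabilistic bisimulation if, whenever `s R t`, each transition
of either state is matched by a transition of the other, with the resulting
distributions related by the lifted relation `R†`. -/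
def IsBisimulation {S : Type*} [Fintype S] {Act : Type*} (L : PLTS S Act)
    (R : S → S → Prop) : Prop :=
  ∀ s t, R s t →
    (∀ a Δ, L.trans s a Δ → ∃ Θ, L.trans t a Θ ∧ Lift R Δ Θ) ∧
    (∀ a Θ, L.trans t a Θ → ∃ Δ, L.trans s a Δ ∧ Lift R Δ Θ)

/-- Probabilistic bisimilarity `∼`: the largest probabilistic bisimulation. -/
def Bisim {S : Type*} [Fintype S] {Act : Type*} (L : PLTS S Act) (s t : S) : Prop :=
  ∃ R, IsBisimulation L R ∧ R s t

/-- A 1-bounded pseudometric on `S`: a function `m : S × S → [0,1]` with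
`m s s = 0`, symmetry and the triangle inequality. -/
structure BPM (S : Type*) where
  d : S → S → ℝ
  nonneg : ∀ s t, 0 ≤ d s t
  le_one : ∀ s t, d s t ≤ 1
  refl : ∀ s, d s s = 0
  symm : ∀ s t, d s t = d t s
  triangle : ∀ s t u, d s t ≤ d s u + d u t

/-- The order on 1-bounded pseudometrics: `m₁ ⪯ m₂` iff `m₁ s t ≥ m₂ s t`
for all `s, t` (reversed pointwise order). -/
instance {S : Type*} : PartialOrder (BPM S) where
  le m₁ m₂ := ∀ s t, m₂.d s t ≤ m₁.d s t
  le_refl m s t := le_refl _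
  le_trans m₁ m₂ m₃ h₁ h₂ s t := le_trans (h₂ s t) (h₁ s t)
  le_antisymm m₁ m₂ h₁ h₂ := by
    cases m₁; cases m₂
    simp only [BPM.mk.injEq]
    funext s t
    exact le_antisymm (h₂ s t) (h₁ s t)

/-- The Kantorovich lifting `m̂` of a 1-bounded pseudometric `m` on the finite
set `S`, as the optimal value of the linear program:
maximise `∑ s, (Δ(s) − Θ(s))·x s` subject to `x s − x t ≤ m s t` and
`0 ≤ x s ≤ 1`. -/
noncomputable def kant {S : Type*} [Fintype S] (m : S → S → ℝ)
    (Δ Θ : FDist S) : ℝ :=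
  sSup { c | ∃ x : S → ℝ,
    (∀ s t, x s - x t ≤ m s t) ∧
    (∀ s, 0 ≤ x s ∧ x s ≤ 1) ∧
    c = ∑ s, (Δ.f s - Θ.f s) * x s }

/-- Supremum of a set of reals, with `sup ∅ = 0`. -/
noncomputable def hsup (A : Set ℝ) : ℝ := if A = ∅ then 0 else sSup A

/-- Infimum of a set of reals, with `inf ∅ = 1`. -/
noncomputable def hinf (A : Set ℝ) : ℝ := if A = ∅ then 1 else sInf A

/-- The Hausdorff distance between `X, Y ⊆ Z` induced by a distance `d` on
`Z`: `H_d(X,Y) = max{ sup_{x∈X} inf_{y∈Y} d x y, sup_{y∈Y} inf_{x∈X} d y x }`,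
with `inf ∅ = 1` and `sup ∅ = 0`. -/
noncomputable def hausdorff {Z : Type*} (d : Z → Z → ℝ) (X Y : Set Z) : ℝ :=
  max (hsup { v | ∃ x ∈ X, v = hinf { w | ∃ y ∈ Y, w = d x y } })
      (hsup { v | ∃ y ∈ Y, v = hinf { w | ∃ x ∈ X, w = d y x } })

/-- The function `F` on 1-bounded pseudometrics (given here by its value):
`F(m)(s,t) = sup_{a ∈ Act} H_{m̂}(der(s,a), der(t,a))`. -/
noncomputable def Fval {S : Type*} [Fintype S] {Act : Type*} (L : PLTS S Act)
    (m : S → S → ℝ) (s t : S) : ℝ :=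
  hsup { v | ∃ a : Act, v = hausdorff (kant m) (der L s a) (der L t a) }

/-- `m` is a state-metric if for all `ε ∈ [0,1)`, `m s t ≤ ε` implies that
every transition `s −a→ Δ` is matched by some `t −a→ Δ'` with
`m̂(Δ,Δ') ≤ ε`. -/
def StateMetric {S : Type*} [Fintype S] {Act : Type*} (L : PLTS S Act)
    (m : BPM S) : Prop :=
  ∀ ε : ℝ, 0 ≤ ε → ε < 1 → ∀ s t, m.d s t ≤ ε →
    ∀ a Δ, L.trans s a Δ → ∃ Δ', L.trans t a Δ' ∧ kant m.d Δ Δ' ≤ ε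

/-! For an equivalence relation `E`, `Lift E Δ Θ` holds iff `Δ` and `Θ` give the same mass to every
`E`-class; a witness of the converse direction is the coupling that is independent within each
class. The kernel `{m = 0}` of a pseudometric is an equivalence, and `m̂(Δ, Θ) = 0` iff `Δ` and `Θ`
agree on its classes: the test function `δ · 1_C`, with `δ` the least positive distance, detects the
class `C`. So the kernel of a state-metric is a bisimulation (take `ε = 0`). Conversely, the
equivalence closure `E` of a bisimulation is again a bisimulation, and the `0`/`1` metric with
kernel `E` is a state-metric, which `m_max` lies below. -/

open Finset

section Lift

variable {S T : Type*} [Fintype S] [Fintype T]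

theorem FDist.sum_point_mul (s : S) (x : S → ℝ) : ∑ u, (FDist.point s).f u * x u = x s := by
  simp [FDist.point]

theorem sum_sum_smul_apply_mul {ι : Type*} (I : Finset ι) (p : ι → ℝ) (f : ι → S → ℝ)
    (x : S → ℝ) : ∑ u, (∑ i ∈ I, p i • f i) u * x u = ∑ i ∈ I, p i * ∑ u, f i u * x u := by
  simp only [Finset.sum_apply, Pi.smul_apply, smul_eq_mul, sum_mul, mul_sum, mul_assoc]
  exact sum_comm

theorem Lift.mono {R R' : S → T → Prop} (hRR' : ∀ u v, R u v → R' u v) {Δ : FDist S}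
    {Θ : FDist T} (h : Lift R Δ Θ) : Lift R' Δ Θ := by
  induction h with
  | point hst => exact .point (hRR' _ _ hst)
  | convex I p hp hsum Δs Θs _ Δ Θ hΔ hΘ ih => exact .convex I p hp hsum Δs Θs ih Δ Θ hΔ hΘ

theorem Lift.sum_mul_eq {R : S → T → Prop} {Δ : FDist S} {Θ : FDist T} (h : Lift R Δ Θ)
    (x : S → ℝ) (y : T → ℝ) (hxy : ∀ u v, R u v → x u = y v) :
    ∑ u, Δ.f u * x u = ∑ v, Θ.f v * y v := by
  induction h with
  | point hst => rw [FDist.sum_point_mul, FDist.sum_point_mul, hxy _ _ hst]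
  | convex I p _ _ Δs Θs _ Δ Θ hΔ hΘ ih =>
    rw [hΔ, hΘ, sum_sum_smul_apply_mul, sum_sum_smul_apply_mul]
    exact sum_congr rfl fun i hi => by rw [ih i hi]

theorem Lift.convex_of_countable {ι : Type*} [Countable ι] {R : S → T → Prop} (I : Finset ι)
    (p : ι → ℝ) (hp : ∀ i ∈ I, 0 ≤ p i) (hsum : ∑ i ∈ I, p i = 1) (Δs : ι → FDist S)
    (Θs : ι → FDist T) (h : ∀ i ∈ I, Lift R (Δs i) (Θs i)) {Δ : FDist S} {Θ : FDist T}
    (hΔ : Δ.f = ∑ i ∈ I, p i • (Δs i).f) (hΘ : Θ.f = ∑ i ∈ I, p i • (Θs i).f) :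
    Lift R Δ Θ := by
  obtain ⟨f, hf⟩ := Countable.exists_injective_nat ι
  obtain ⟨i₀, -⟩ := I.exists_ne_zero_of_sum_ne_zero (by rw [hsum]; exact one_ne_zero)
  have : Nonempty ι := ⟨i₀⟩
  have hgf : ∀ i, Function.invFun f (f i) = i := Function.leftInverse_invFun hf
  refine .convex (I.map ⟨f, hf⟩) (p ∘ Function.invFun f) ?_ ?_ (Δs ∘ Function.invFun f)
    (Θs ∘ Function.invFun f) ?_ Δ Θ ?_ ?_
  all_goals simpa [hgf]

theorem Lift.of_coupling {R : S → T → Prop} {Δ : FDist S} {Θ : FDist T} (w : S × T → ℝ)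
    (hw : ∀ q, 0 ≤ w q) (hwR : ∀ q, w q ≠ 0 → R q.1 q.2)
    (hΔ : ∀ u, ∑ v, w (u, v) = Δ.f u) (hΘ : ∀ v, ∑ u, w (u, v) = Θ.f v) : Lift R Δ Θ := by
  refine Lift.convex_of_countable {q | w q ≠ 0} w (fun q _ => hw q) ?_
    (fun q => FDist.point q.1) (fun q => FDist.point q.2)
    (fun q hq => .point (hwR q (mem_filter.1 hq).2)) ?_ ?_
  · rw [sum_filter_ne_zero, Fintype.sum_prod_type]
    simp only [hΔ, Δ.sum_one]
  · rw [sum_filter_of_ne (p := fun q => w q ≠ 0) fun q _ hq hw0 => hq (by simp [hw0])]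
    funext u
    simp [FDist.point, Fintype.sum_prod_type_right, hΔ]
  · rw [sum_filter_of_ne (p := fun q => w q ≠ 0) fun q _ hq hw0 => hq (by simp [hw0])]
    funext u
    simp [FDist.point, Fintype.sum_prod_type, hΘ]

noncomputable def classMass (E : S → S → Prop) (Δ : FDist S) (u : S) : ℝ :=
  ∑ w with E u w, Δ.f w

theorem classMass_nonneg (E : S → S → Prop) (Δ : FDist S) (u : S) : 0 ≤ classMass E Δ u :=
  sum_nonneg fun w _ => Δ.nonneg w

theorem le_classMass {E : S → S → Prop} (hE : Equivalence E) (Δ : FDist S) (u : S) :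
    Δ.f u ≤ classMass E Δ u :=
  single_le_sum (fun w _ => Δ.nonneg w) (mem_filter.2 ⟨mem_univ u, hE.refl u⟩)

theorem classMass_congr {E : S → S → Prop} (hE : Equivalence E) (Δ : FDist S) {u v : S}
    (huv : E u v) : classMass E Δ u = classMass E Δ v := by
  unfold classMass
  congr 1
  ext w
  simpa using ⟨hE.trans (hE.symm huv), hE.trans huv⟩

theorem sum_mul_indicator_eq_classMass (E : S → S → Prop) (Δ : FDist S) (u : S) :
    ∑ w, Δ.f w * (if E u w then 1 else 0) = classMass E Δ u := by
  simp [classMass, sum_filter]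

theorem Lift.classMass_eq {E : S → S → Prop} (hE : Equivalence E) {Δ Θ : FDist S}
    (h : Lift E Δ Θ) (u : S) : classMass E Δ u = classMass E Θ u := by
  rw [← sum_mul_indicator_eq_classMass, ← sum_mul_indicator_eq_classMass]
  refine h.sum_mul_eq _ _ fun v w hvw => ?_
  simp only [show E u v ↔ E u w from ⟨(hE.trans · hvw), (hE.trans · (hE.symm hvw))⟩]

/-- Within each class, `Δ` and `Θ` are coupled independently. -/
theorem lift_of_classMass_eq {E : S → S → Prop} (hE : Equivalence E) {Δ Θ : FDist S}
    (h : ∀ u, classMass E Δ u = classMass E Θ u) : Lift E Δ Θ := by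
  refine Lift.of_coupling
    (fun q => if E q.1 q.2 then Δ.f q.1 * Θ.f q.2 / classMass E Δ q.1 else 0)
    (fun q => ?_) (fun q hq => ?_) (fun u => ?_) (fun v => ?_)
  · split_ifs
    exacts [div_nonneg (mul_nonneg (Δ.nonneg _) (Θ.nonneg _)) (classMass_nonneg E Δ _), le_rfl]
  · by_contra hn
    exact hq (if_neg hn)
  · calc ∑ v, (if E u v then Δ.f u * Θ.f v / classMass E Δ u else 0)
        = Δ.f u / classMass E Δ u * classMass E Θ u := by
          rw [classMass.eq_1 E Θ, mul_sum, sum_filter]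
          exact sum_congr rfl fun v _ => by split_ifs <;> ring
      _ = Δ.f u := by
          rw [← h u]
          exact div_mul_cancel_of_imp fun h0 =>
            le_antisymm (h0 ▸ le_classMass hE Δ u) (Δ.nonneg u)
  · calc ∑ u, (if E u v then Δ.f u * Θ.f v / classMass E Δ u else 0)
        = Θ.f v / classMass E Θ v * classMass E Δ v := by
          rw [classMass.eq_1 E Δ v, mul_sum, sum_filter]
          refine sum_congr rfl fun u _ => ?_
          by_cases huv : E u v
          · rw [if_pos huv, if_pos (hE.symm huv), classMass_congr hE Δ huv, h v]
            ring
          · rw [if_neg huv, if_neg fun hvu => huv (hE.symm hvu)]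
      _ = Θ.f v := by
          rw [h v]
          exact div_mul_cancel_of_imp fun h0 =>
            le_antisymm (h0 ▸ le_classMass hE Θ v) (Θ.nonneg v)

theorem lift_iff_classMass_eq {E : S → S → Prop} (hE : Equivalence E) {Δ Θ : FDist S} :
    Lift E Δ Θ ↔ ∀ u, classMass E Δ u = classMass E Θ u :=
  ⟨fun h => h.classMass_eq hE, lift_of_classMass_eq hE⟩

theorem Equivalence.lift {E : S → S → Prop} (hE : Equivalence E) : Equivalence (Lift E) where
  refl _ := (lift_iff_classMass_eq hE).2 fun _ => rfl
  symm h := (lift_iff_classMass_eq hE).2 fun u => (h.classMass_eq hE u).symm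
  trans h h' := (lift_iff_classMass_eq hE).2 fun u =>
    (h.classMass_eq hE u).trans (h'.classMass_eq hE u)

end Lift

namespace BPM

variable {S : Type*}

def Kernel (m : BPM S) (u v : S) : Prop := m.d u v = 0

theorem kernel_equivalence (m : BPM S) : Equivalence m.Kernel where
  refl := m.refl
  symm {u v} h := (m.symm v u).trans h
  trans {u v w} huv hvw :=
    le_antisymm (by linarith [m.triangle u w v, huv.le, hvw.le]) (m.nonneg u w)

noncomputable def ofEquivalence {E : S → S → Prop} (hE : Equivalence E) : BPM S where
  d u v := if E u v then 0 else 1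
  nonneg u v := by split_ifs <;> norm_num
  le_one u v := by split_ifs <;> norm_num
  refl u := if_pos (hE.refl u)
  symm u v := by simp only [show E u v ↔ E v u from ⟨hE.symm, hE.symm⟩]
  triangle u v w := by
    by_cases huv : E u v
    · split_ifs <;> norm_num
    · have : ¬(E u w ∧ E w v) := fun h => huv (hE.trans h.1 h.2)
      rw [if_neg huv]
      split_ifs <;> simp_all

theorem kernel_ofEquivalence {E : S → S → Prop} (hE : Equivalence E) {u v : S} :
    (ofEquivalence hE).Kernel u v ↔ E u v := by
  simp [Kernel, ofEquivalence]

end BPM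

section Kantorovich

variable {S : Type*} [Fintype S]

theorem le_kant {m : S → S → ℝ} (Δ Θ : FDist S) {x : S → ℝ} (hx : ∀ s t, x s - x t ≤ m s t)
    (hx01 : ∀ s, 0 ≤ x s ∧ x s ≤ 1) : ∑ s, (Δ.f s - Θ.f s) * x s ≤ kant m Δ Θ := by
  refine le_csSup ⟨1, ?_⟩ ⟨x, hx, hx01, rfl⟩
  rintro c ⟨y, -, hy01, rfl⟩
  calc ∑ s, (Δ.f s - Θ.f s) * y s
      ≤ ∑ s, Δ.f s := sum_le_sum fun s _ => by
        nlinarith [hy01 s, Δ.nonneg s, Θ.nonneg s]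
    _ = 1 := Δ.sum_one

namespace BPM

variable (m : BPM S)

theorem exists_pos_le_dist : ∃ δ, 0 < δ ∧ δ ≤ 1 ∧ ∀ p q, 0 < m.d p q → δ ≤ m.d p q := by
  by_cases h : ∃ q : S × S, 0 < m.d q.1 q.2
  · obtain ⟨q₀, hq₀, hmin⟩ := (univ.filter fun q : S × S => 0 < m.d q.1 q.2).exists_min_image
      (fun q => m.d q.1 q.2) (by simpa [filter_nonempty_iff] using h)
    exact ⟨_, (mem_filter.1 hq₀).2, m.le_one _ _, fun p q hpq => hmin (p, q) (by simpa using hpq)⟩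
  · push Not at h
    exact ⟨1, one_pos, le_rfl, fun p q hpq => absurd hpq (not_lt.2 (h (p, q)))⟩

/-- A vanishing Kantorovich distance forces every test function to have the same mean under both
distributions, because the test functions are closed under `x ↦ 1 - x`. -/
theorem sum_sub_mul_eq_zero_of_kant_nonpos {Δ Θ : FDist S} (hk : kant m.d Δ Θ ≤ 0) {x : S → ℝ}
    (hx : ∀ s t, x s - x t ≤ m.d s t) (hx01 : ∀ s, 0 ≤ x s ∧ x s ≤ 1) :
    ∑ s, (Δ.f s - Θ.f s) * x s = 0 := by
  have hle := le_kant Δ Θ hx hx01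
  have hle' := le_kant (m := m.d) Δ Θ (x := fun s => 1 - x s)
    (fun s t => by linarith [hx t s, m.symm s t]) (fun s => by constructor <;> linarith [hx01 s])
  have hneg : ∑ s, (Δ.f s - Θ.f s) * (1 - x s) = -∑ s, (Δ.f s - Θ.f s) * x s := by
    simp only [mul_sub, mul_one, sum_sub_distrib, Δ.sum_one, Θ.sum_one]
    ring
  linarith

theorem classMass_kernel_eq_of_kant_nonpos {Δ Θ : FDist S} (hk : kant m.d Δ Θ ≤ 0) (u : S) :
    classMass m.Kernel Δ u = classMass m.Kernel Θ u := by
  obtain ⟨δ, hδ0, hδ1, hδ⟩ := m.exists_pos_le_dist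
  have hx : ∀ p q,
      (if m.Kernel u p then δ else 0) - (if m.Kernel u q then δ else 0) ≤ m.d p q := by
    intro p q
    by_cases hp : m.Kernel u p
    · by_cases hq : m.Kernel u q
      · simp [hp, hq, m.nonneg]
      · rw [if_pos hp, if_neg hq, sub_zero]
        exact hδ p q <| (m.nonneg p q).lt_of_ne fun h => hq (m.kernel_equivalence.trans hp h.symm)
    · rw [if_neg hp]
      split_ifs <;> linarith [m.nonneg p q]
  have h0 := m.sum_sub_mul_eq_zero_of_kant_nonpos hk hx fun p => by
    split_ifs <;> constructor <;> linarith
  have hδC : ∑ s, (Δ.f s - Θ.f s) * (if m.Kernel u s then δ else 0)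
      = δ * (classMass m.Kernel Δ u - classMass m.Kernel Θ u) := by
    rw [← sum_mul_indicator_eq_classMass, ← sum_mul_indicator_eq_classMass, ← sum_sub_distrib,
      mul_sum]
    exact sum_congr rfl fun s _ => by split_ifs <;> ring
  rw [hδC] at h0
  linarith [(mul_eq_zero.1 h0).resolve_left hδ0.ne']

theorem kant_nonpos_iff_lift {Δ Θ : FDist S} : kant m.d Δ Θ ≤ 0 ↔ Lift m.Kernel Δ Θ := by
  refine ⟨fun hk => lift_of_classMass_eq m.kernel_equivalence
    (m.classMass_kernel_eq_of_kant_nonpos hk), fun h => Real.sSup_le ?_ le_rfl⟩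
  rintro c ⟨x, hx, -, rfl⟩
  have hmean := h.sum_mul_eq x x fun u v huv =>
    le_antisymm (by linarith [hx u v, huv.le]) (by linarith [hx v u, m.symm v u, huv.le])
  simp [sub_mul, sum_sub_distrib, hmean]

end BPM

end Kantorovich

section Bisimulation

variable {S : Type*} [Fintype S] {Act : Type*} {L : PLTS S Act}

theorem IsBisimulation.eqvGen {R : S → S → Prop} (hR : IsBisimulation L R) :
    IsBisimulation L (Relation.EqvGen R) := by
  have hE := (Relation.EqvGen.is_equivalence R).lift
  intro s t hst
  induction hst with
  | rel u v huv =>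
    exact ⟨fun a Δ h => ((hR u v huv).1 a Δ h).imp fun _ ⟨ht, hl⟩ => ⟨ht, hl.mono .rel⟩,
      fun a Θ h => ((hR u v huv).2 a Θ h).imp fun _ ⟨ht, hl⟩ => ⟨ht, hl.mono .rel⟩⟩
  | refl u => exact ⟨fun a Δ h => ⟨Δ, h, hE.refl Δ⟩, fun a Θ h => ⟨Θ, h, hE.refl Θ⟩⟩
  | symm u v _ ih =>
    exact ⟨fun a Δ h => (ih.2 a Δ h).imp fun _ ⟨ht, hl⟩ => ⟨ht, hE.symm hl⟩,
      fun a Θ h => (ih.1 a Θ h).imp fun _ ⟨ht, hl⟩ => ⟨ht, hE.symm hl⟩⟩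
  | trans u v w _ _ ihuv ihvw =>
    refine ⟨fun a Δ h => ?_, fun a Θ h => ?_⟩
    · obtain ⟨Θ, hΘ, hΔΘ⟩ := ihuv.1 a Δ h
      obtain ⟨Ξ, hΞ, hΘΞ⟩ := ihvw.1 a Θ hΘ
      exact ⟨Ξ, hΞ, hE.trans hΔΘ hΘΞ⟩
    · obtain ⟨Ξ, hΞ, hΞΘ⟩ := ihvw.2 a Θ h
      obtain ⟨Δ, hΔ, hΔΞ⟩ := ihuv.2 a Ξ hΞ
      exact ⟨Δ, hΔ, hE.trans hΔΞ hΞΘ⟩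

theorem IsBisimulation.stateMetric_ofEquivalence {E : S → S → Prop} (hE : Equivalence E)
    (hB : IsBisimulation L E) : StateMetric L (BPM.ofEquivalence hE) := by
  intro ε hε0 hε1 u v hd a Δ h
  have huv : E u v := by
    by_contra hn
    simp only [BPM.ofEquivalence, if_neg hn] at hd
    linarith
  obtain ⟨Θ, hΘ, hl⟩ := (hB u v huv).1 a Δ h
  have hk := (BPM.ofEquivalence hE).kant_nonpos_iff_lift.2
    (hl.mono fun _ _ => (BPM.kernel_ofEquivalence hE).2)
  exact ⟨Θ, hΘ, hk.trans hε0⟩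

theorem StateMetric.isBisimulation_kernel {m : BPM S} (hm : StateMetric L m) :
    IsBisimulation L m.Kernel := by
  have hsim : ∀ u v, m.Kernel u v → ∀ a Δ, L.trans u a Δ →
      ∃ Θ, L.trans v a Θ ∧ Lift m.Kernel Δ Θ := fun u v huv a Δ h =>
    (hm 0 le_rfl one_pos u v huv.le a Δ h).imp fun _ ⟨ht, hk⟩ => ⟨ht, m.kant_nonpos_iff_lift.1 hk⟩
  refine fun u v huv => ⟨hsim u v huv, fun a Θ h => ?_⟩
  exact (hsim v u (m.kernel_equivalence.symm huv) a Θ h).imp fun _ ⟨ht, hl⟩ =>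
    ⟨ht, m.kernel_equivalence.lift.symm hl⟩

end Bisimulation

/-- Two states of a finite-state pLTS are probabilistically bisimilar iff
their distance under the greatest state-metric `m_max` is `0`. -/
theorem bisim_iff_mmax_eq_zero {S : Type*} [Fintype S] {Act : Type*}
    (L : PLTS S Act) (mmax : BPM S)
    (hsm : StateMetric L mmax)
    (hgreatest : ∀ m : BPM S, StateMetric L m → m ≤ mmax)
    (s t : S) :
    Bisim L s t ↔ mmax.d s t = 0 := by
  constructor
  · rintro ⟨R, hR, hst⟩
    have hE := Relation.EqvGen.is_equivalence R
    have hle := hgreatest _ (hR.eqvGen.stateMetric_ofEquivalence hE) s t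
    have h0 : (BPM.ofEquivalence hE).d s t = 0 := (BPM.kernel_ofEquivalence hE).2 (.rel s t hst)
    exact le_antisymm (hle.trans_eq h0) (mmax.nonneg s t)
  · exact fun h => ⟨mmax.Kernel, hsm.isBisimulation_kernel, h⟩
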